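/- Suppose a group G acts faithfully and uniformly equicontinuously on a Hausdorff uniform space X and the action has small scale bounded orbits. Let B be a basis of G-invariant entourages of X; for each E ∈ B the subgroup G_E is normal in G, and for F ⊆ E in B there is a homomorphism ψ_{FE} : G/G_F → G/G_E sending gG_F to gG_E, giving an inverse system of groups {G/G_E}_{E∈B} (indexed by B ordered by reverse inclusion). Then the homomorphism G → lim_{E∈B} G/G_E sending g to the thread (gG_E)_{E∈B} is injective, so G is isomorphic to a subgroup of lim G/G_E; if moreover the orbit map p : X → X/G has complete fibers, this homomorphism is an isomorphism. -/

import Mathlib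

open Filter Set

universe u v

section Actions

variable (G : Type*) (X : Type*)

/-- The action of `G` on the uniform space `X` is neutral. -/
def IsNeutralAction [SMul G X] [UniformSpace X] : Prop :=
  ∀ E ∈ uniformity X, ∃ F ∈ uniformity X,
    ∀ (x y : X) (g : G), (x, g • y) ∈ F → ∃ h : G, (h • x, y) ∈ E

/-- `G_E`: the subgroup of `G` generated by the elements that move some point
of `X` within the entourage `E`. -/
def subgroupEnt [Group G] [MulAction G X] (E : Set (X × X)) : Subgroup G :=
  Subgroup.closure { g : G | ∃ x : X, (x, g • x) ∈ E }

/-- The action has small scale bounded orbits. -/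
def SmallScaleBoundedOrbits [Group G] [MulAction G X] [UniformSpace X] : Prop :=
  ∀ E ∈ uniformity X, ∃ F ∈ uniformity X,
    ∀ g ∈ subgroupEnt G X F, ∀ x : X, (x, g • x) ∈ E

/-- The action is uniformly properly discontinuous. -/
def UnifProperlyDisc [Group G] [SMul G X] [UniformSpace X] : Prop :=
  ∃ E₀ ∈ uniformity X, ∀ (g : G) (x : X), (x, g • x) ∈ E₀ → g = 1

/-- The action is faithful. -/
def FaithfulAction [Group G] [SMul G X] : Prop :=
  ∀ g : G, (∀ x : X, g • x = x) → g = 1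

/-- The action is uniformly equicontinuous. -/
def UnifEquicont [SMul G X] [UniformSpace X] : Prop :=
  ∀ E ∈ uniformity X, ∃ F ∈ uniformity X,
    ∀ (g : G) (x y : X), (x, y) ∈ F → (g • x, g • y) ∈ E

/-- The entourage `E` is `G`-invariant. -/
def InvariantEnt [SMul G X] (E : Set (X × X)) : Prop :=
  ∀ (g : G) (x y : X), (x, y) ∈ E → (g • x, g • y) ∈ E

end Actions

/-!
A thread `(a_E G_E)_{E ∈ B}` gives the points `a_E • x` of one orbit. For `E, E' ⊆ K` the thread
condition puts `a_E⁻¹ a_{E'}` in `G_K`, and small scale bounded orbits together with the invariance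
of the entourages make `a_E • x` and `a_{E'} • x` close once `K` is small. So these points form a
Cauchy net, which converges in the complete orbit to some `g • x`; invariance turns the closeness of
`g • x` and `a_E • x` back into `g⁻¹ a_E ∈ G_E`, i.e. `g` represents the thread. Injectivity: an
element lying in every `G_E` moves each point by less than every entourage, so it fixes `X` since
`X` is Hausdorff, and the action is faithful.
-/

open scoped Uniformity

section

variable {G X : Type*} [Group G] [MulAction G X]

theorem subgroupEnt_mono {E F : Set (X × X)} (h : E ⊆ F) :
    subgroupEnt G X E ≤ subgroupEnt G X F :=
  Subgroup.closure_mono fun _ ⟨x, hx⟩ => ⟨x, h hx⟩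

theorem InvariantEnt.inv_mul_mem_subgroupEnt {E : Set (X × X)} (hE : InvariantEnt G X E)
    {a b : G} {x : X} (h : (a • x, b • x) ∈ E) : a⁻¹ * b ∈ subgroupEnt G X E :=
  Subgroup.subset_closure ⟨x, by simpa [smul_smul] using hE a⁻¹ _ _ h⟩

theorem InvariantEnt.smul_mem_of_inv_mul_mem {E F : Set (X × X)} (hE : InvariantEnt G X E)
    (hF : ∀ g ∈ subgroupEnt G X F, ∀ x : X, (x, g • x) ∈ E) {a b : G}
    (h : a⁻¹ * b ∈ subgroupEnt G X F) (x : X) : (a • x, b • x) ∈ E := by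
  simpa [smul_smul] using hE a _ _ (hF _ h x)

theorem FaithfulAction.subsingleton [IsEmpty X] (h : FaithfulAction G X) : Subsingleton G :=
  ⟨fun a b => (h a isEmptyElim).trans (h b isEmptyElim).symm⟩

variable [UniformSpace X]

theorem eq_one_of_forall_mem_subgroupEnt [T0Space X] (hfaith : FaithfulAction G X)
    (hssbo : SmallScaleBoundedOrbits G X) {g : G}
    (hg : ∀ E ∈ 𝓤 X, g ∈ subgroupEnt G X E) : g = 1 :=
  hfaith g fun x => (eq_of_uniformity fun hV =>
    let ⟨F, hF, hFV⟩ := hssbo _ hV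
    hFV g (hg F hF) x).symm

theorem injective_mk_subgroupEnt [T0Space X] (hfaith : FaithfulAction G X)
    (hssbo : SmallScaleBoundedOrbits G X) {B : Set (Set (X × X))}
    (hBbasis : ∀ S ∈ 𝓤 X, ∃ E ∈ B, E ⊆ S) :
    Function.Injective fun g : G => fun i : B => (g : G ⧸ subgroupEnt G X i.1) := by
  intro g₁ g₂ h
  refine inv_mul_eq_one.1 (eq_one_of_forall_mem_subgroupEnt hfaith hssbo fun S hS => ?_)
  obtain ⟨E, hEB, hES⟩ := hBbasis S hS
  exact subgroupEnt_mono hES (QuotientGroup.eq.1 (congrFun h ⟨E, hEB⟩))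

end

section

variable {X : Type*} [UniformSpace X]

/-- `B` directed by reverse inclusion, as a filter (the two agree when `B` is a basis). -/
def smallEntouragesIn (B : Set (Set (X × X))) : Filter B :=
  (𝓤 X).smallSets.comap (↑)

theorem eventually_subset_smallEntouragesIn {B : Set (Set (X × X))} {S : Set (X × X)}
    (hS : S ∈ 𝓤 X) : ∀ᶠ i in smallEntouragesIn B, i.1 ⊆ S :=
  (eventually_smallSets_subset.2 hS).comap _

theorem smallEntouragesIn_neBot {B : Set (Set (X × X))} (hBbasis : ∀ S ∈ 𝓤 X, ∃ E ∈ B, E ⊆ S) :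
    (smallEntouragesIn B).NeBot := by
  refine comap_neBot fun T hT => ?_
  obtain ⟨S, hS, hST⟩ := eventually_smallSets.1 hT
  obtain ⟨E, hEB, hES⟩ := hBbasis S hS
  exact ⟨⟨E, hEB⟩, hST E hES⟩

variable {G : Type*} [Group G] [MulAction G X] {B : Set (Set (X × X))}

theorem cauchy_map_smul_of_compatible (hssbo : SmallScaleBoundedOrbits G X)
    (hBent : ∀ E ∈ B, E ∈ 𝓤 X) (hBbasis : ∀ S ∈ 𝓤 X, ∃ E ∈ B, E ⊆ S)
    (hBinv : ∀ E ∈ B, InvariantEnt G X E) {a : B → G}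
    (ha : ∀ i j : B, j.1 ⊆ i.1 → (a j : G ⧸ subgroupEnt G X i.1) = a i) (x : X) :
    Cauchy (map (fun i => a i • x) (smallEntouragesIn B)) := by
  refine cauchy_map_iff.2 ⟨smallEntouragesIn_neBot hBbasis, fun U hU => mem_map.2 ?_⟩
  obtain ⟨E, hEB, hEU⟩ := hBbasis U hU
  obtain ⟨F, hF, hFE⟩ := hssbo E (hBent E hEB)
  obtain ⟨K, hKB, hKF⟩ := hBbasis F hF
  have hsmall := eventually_subset_smallEntouragesIn (B := B) (hBent K hKB)
  filter_upwards [hsmall.prod_mk hsmall] with ⟨i, j⟩ ⟨hi, hj⟩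
  have hij : (a i : G ⧸ subgroupEnt G X K) = a j :=
    (ha ⟨K, hKB⟩ i hi).trans (ha ⟨K, hKB⟩ j hj).symm
  exact hEU ((hBinv E hEB).smul_mem_of_inv_mul_mem hFE
    (subgroupEnt_mono hKF (QuotientGroup.eq.1 hij)) x)

theorem exists_forall_mk_eq_of_compatible (x : X) (hcomplete : IsComplete (MulAction.orbit G x))
    (hssbo : SmallScaleBoundedOrbits G X)
    (hBent : ∀ E ∈ B, E ∈ 𝓤 X) (hBbasis : ∀ S ∈ 𝓤 X, ∃ E ∈ B, E ⊆ S)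
    (hBinv : ∀ E ∈ B, InvariantEnt G X E) {a : B → G}
    (ha : ∀ i j : B, j.1 ⊆ i.1 → (a j : G ⧸ subgroupEnt G X i.1) = a i) :
    ∃ g : G, ∀ i : B, (g : G ⧸ subgroupEnt G X i.1) = a i := by
  have := smallEntouragesIn_neBot hBbasis
  obtain ⟨_, ⟨g, rfl⟩, hlim⟩ :=
    hcomplete _ (cauchy_map_smul_of_compatible hssbo hBent hBbasis hBinv ha x)
      (tendsto_principal.2 (.of_forall fun i => MulAction.mem_orbit x (a i)))
  refine ⟨g, fun i => ?_⟩
  have hnear : ∀ᶠ j in smallEntouragesIn B, (g • x, a j • x) ∈ i.1 :=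
    hlim (mem_nhds_left _ (hBent _ i.2))
  obtain ⟨j, hgj, hji⟩ := (hnear.and (eventually_subset_smallEntouragesIn (hBent _ i.2))).exists
  rw [← ha i j hji]
  exact QuotientGroup.eq.2 ((hBinv _ i.2).inv_mul_mem_subgroupEnt hgj)

end

theorem toLimQuotients_injective_and_surjective_general
    {G : Type u} [Group G] {X : Type v} [UniformSpace X] [MulAction G X]
    [T2Space X]
    (hfaith : FaithfulAction G X)
    (hssbo : SmallScaleBoundedOrbits G X)
    (B : Set (Set (X × X)))
    (hBent : ∀ E ∈ B, E ∈ uniformity X)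
    (hBbasis : ∀ S ∈ uniformity X, ∃ E ∈ B, E ⊆ S)
    (hBinv : ∀ E ∈ B, InvariantEnt G X E) :
    Function.Injective (fun g : G => fun i : B =>
      (QuotientGroup.mk g : G ⧸ subgroupEnt G X i.1)) ∧
    ((∀ x : X, IsComplete (MulAction.orbit G x)) →
      ∀ t : ∀ i : B, G ⧸ subgroupEnt G X i.1,
        (∀ (i j : B) (_ : i.1 ⊆ j.1) (g : G),
          t i = QuotientGroup.mk g → t j = QuotientGroup.mk g) →
        ∃ g : G, ∀ i : B, t i = QuotientGroup.mk g) := by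
  refine ⟨injective_mk_subgroupEnt hfaith hssbo hBbasis, fun hcomp t ht => ?_⟩
  rcases isEmpty_or_nonempty X with _ | ⟨⟨x⟩⟩
  · have := hfaith.subsingleton
    exact ⟨1, fun i => Subsingleton.elim _ _⟩
  obtain ⟨g, hg⟩ := exists_forall_mk_eq_of_compatible (a := fun i => (t i).out) x (hcomp x)
    hssbo hBent hBbasis hBinv fun i j hji =>
      (ht j i hji _ (QuotientGroup.out_eq' (t j)).symm).symm.trans
        (QuotientGroup.out_eq' (t i)).symm
  exact ⟨g, fun i => ((hg i).trans (QuotientGroup.out_eq' (t i))).symm⟩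

/-- Suppose `G` acts faithfully and uniformly equicontinuously on a Hausdorff
uniform space `X` with small scale bounded orbits, and `B` is a basis of
`G`-invariant entourages of `X` (so that each `G_E`, `E ∈ B`, is normal in
`G`).  Then the natural homomorphism `G → lim_{E ∈ B} G/G_E`,
`g ↦ (g G_E)_{E ∈ B}`, is injective, so `G` is isomorphic to a subgroup of
`lim G/G_E`; and if the orbit map `X → X/G` has complete fibers (every orbit is
complete) it is an isomorphism, i.e. it maps onto the set of threads. -/
theorem toLimQuotients_injective_and_surjective
    {G : Type u} [Group G] {X : Type v} [UniformSpace X] [MulAction G X]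
    [T2Space X]
    (hfaith : FaithfulAction G X) (hue : UnifEquicont G X)
    (hssbo : SmallScaleBoundedOrbits G X)
    (B : Set (Set (X × X)))
    (hBent : ∀ E ∈ B, E ∈ uniformity X)
    (hBbasis : ∀ S ∈ uniformity X, ∃ E ∈ B, E ⊆ S)
    (hBinv : ∀ E ∈ B, InvariantEnt G X E)
    (hBnormal : ∀ E ∈ B, (subgroupEnt G X E).Normal) :
    Function.Injective (fun g : G => fun i : B =>
      (QuotientGroup.mk g : G ⧸ subgroupEnt G X i.1)) ∧
    ((∀ x : X, IsComplete (MulAction.orbit G x)) →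
      ∀ t : ∀ i : B, G ⧸ subgroupEnt G X i.1,
        (∀ (i j : B) (_ : i.1 ⊆ j.1) (g : G),
          t i = QuotientGroup.mk g → t j = QuotientGroup.mk g) →
        ∃ g : G, ∀ i : B, t i = QuotientGroup.mk g) :=
  toLimQuotients_injective_and_surjective_general hfaith hssbo B hBent hBbasis hBinv
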